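/- If B is a monotone bead distribution of n beads on [μ,∞) whose gaps are strictly increasing (b₁ < b₂ < ⋯ < bₙ), then every monotone distribution A with Aₖ ≤ Bₖ for all k can be slid to B by finitely many admissible bead slides. -/
import Mathlib


/-- `A` is a monotone bead distribution of `n` beads on `[μ,∞)`.
We use the convention `A 0 = μ`, so the beads are `A 1 < ⋯ < A n` with
`μ ≤ A 1` and nondecreasing successive gaps. -/
def BeadMono (n : ℕ) (μ : ℝ) (A : ℕ → ℝ) : Prop :=
  A 0 = μ ∧ A 0 ≤ A 1 ∧
  (∀ k, 2 ≤ k → k ≤ n → A (k - 1) < A k) ∧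
  (∀ k, 2 ≤ k → k ≤ n → A (k - 1) - A (k - 2) ≤ A k - A (k - 1))

/-- One admissible bead slide: move the `k`-th bead to the right by `δ ≥ 0`
so that the result is again monotone. -/
def BeadSlide (n : ℕ) (μ : ℝ) (A B : ℕ → ℝ) : Prop :=
  ∃ k δ, 1 ≤ k ∧ k ≤ n ∧ 0 ≤ δ ∧
    B = Function.update A k (A k + δ) ∧ BeadMono n μ B

/-- `BeadReach n μ A B`: `B` is obtained from `A` by finitely many admissible slides. -/
def BeadReach (n : ℕ) (μ : ℝ) : (ℕ → ℝ) → (ℕ → ℝ) → Prop :=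
  Relation.ReflTransGen (BeadSlide n μ)

private lemma slide_one {n : ℕ} {μ : ℝ} {P : ℕ → ℝ} (hP : BeadMono n μ P) {j : ℕ} {x : ℝ}
    (h1 : 1 ≤ j) (hjn : j ≤ n) (hx : P j ≤ x)
    (hlt : j < n → x < P (j + 1)) (hgap2 : j < n → x - P (j - 1) ≤ P (j + 1) - x) :
    BeadSlide n μ P (Function.update P j x) ∧ BeadMono n μ (Function.update P j x) := by
  obtain ⟨h0, h01, hst, hgp⟩ := hP
  have hQj : Function.update P j x j = x := Function.update_self _ _ _
  have hQ : ∀ i, i ≠ j → Function.update P j x i = P i := fun i hi =>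
    Function.update_of_ne hi _ _
  have hmono : BeadMono n μ (Function.update P j x) := by
    refine ⟨?_, ?_, ?_, ?_⟩
    · rw [hQ 0 (by omega)]; exact h0
    · by_cases hj1 : j = 1
      · subst hj1
        rw [hQ 0 (by omega), hQj]
        exact h01.trans hx
      · rw [hQ 0 (by omega), hQ 1 (by omega)]
        exact h01
    · intro k hk2 hkn
      by_cases e1 : k = j
      · rw [e1, hQj, hQ (j - 1) (by omega)]
        exact lt_of_lt_of_le (by rw [← e1]; exact hst k hk2 hkn)
          (by rw [e1] at hkn ⊢ <;> exact hx)
      · by_cases e2 : k = j + 1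
        · have r1 : j + 1 - 1 = j := by omega
          rw [e2, r1, hQj, hQ (j + 1) (by omega)]
          exact hlt (by omega)
        · rw [hQ k e1, hQ (k - 1) (by omega)]
          exact hst k hk2 hkn
    · intro k hk2 hkn
      by_cases e1 : k = j
      · have h2j : 2 ≤ j := by omega
        have hjn' : j ≤ n := by omega
        have hg := hgp j h2j (by omega)
        rw [e1, hQj, hQ (j - 1) (by omega), hQ (j - 2) (by omega)]
        linarith
      · by_cases e2 : k = j + 1
        · have r1 : j + 1 - 1 = j := by omega
          have r2 : j + 1 - 2 = j - 1 := by omega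
          rw [e2, r1, r2, hQj, hQ (j + 1) (by omega), hQ (j - 1) (by omega)]
          exact hgap2 (by omega)
        · by_cases e3 : k = j + 2
          · have r1 : j + 2 - 1 = j + 1 := by omega
            have r2 : j + 2 - 2 = j := by omega
            have hg := hgp (j + 2) (by omega) (by omega)
            rw [r1, r2] at hg
            rw [e3, r1, r2, hQj, hQ (j + 2) (by omega), hQ (j + 1) (by omega)]
            linarith
          · rw [hQ k e1, hQ (k - 1) (by omega), hQ (k - 2) (by omega)]
            exact hgp k hk2 hkn
  refine ⟨⟨j, x - P j, h1, hjn, by linarith, ?_, hmono⟩, hmono⟩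
  have hxx : P j + (x - P j) = x := by ring
  rw [hxx]

private lemma sweep_aux {n : ℕ} {μ : ℝ} {T : ℕ → ℝ} (hT : BeadMono n μ T)
    {c ε η : ℝ} (hε0 : 0 ≤ ε) (hεη : ε ≤ η) (hε : η - 2 * c ≤ ε)
    (hcle : ∀ k, 2 ≤ k → k ≤ n → 2 * c ≤ (T k - T (k - 1)) - (T (k - 1) - T (k - 2))) :
    ∀ j, j ≤ n → ∀ P, BeadMono n μ P → (∀ k, 1 ≤ k → k ≤ n → P k ≤ T k) →
      (∀ k, 1 ≤ k → k ≤ n → T k - P k ≤ η) →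
      (∀ k, j < k → k ≤ n → T k - P k ≤ ε) →
      ∃ Q, BeadReach n μ P Q ∧ BeadMono n μ Q ∧ (∀ k, 1 ≤ k → k ≤ n → Q k ≤ T k) ∧
        (∀ k, 1 ≤ k → k ≤ n → T k - Q k ≤ ε) := by
  intro j
  induction j with
  | zero =>
    intro _ P hP hPT _ hup
    exact ⟨P, Relation.ReflTransGen.refl, hP, hPT, fun k hk hkn => hup k (by omega) hkn⟩
  | succ j ih =>
    intro hjn P hP hPT hηb hup
    rcases eq_or_lt_of_le hjn with htop | hmid
    · -- j+1 = n : slide bead n straight to T n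
      have hx : P (j + 1) ≤ T (j + 1) := hPT _ (by omega) hjn
      obtain ⟨hs, hm⟩ := slide_one hP (by omega : 1 ≤ j + 1) hjn hx
        (fun h => absurd h (by omega)) (fun h => absurd h (by omega))
      have hQj : Function.update P (j + 1) (T (j + 1)) (j + 1) = T (j + 1) :=
        Function.update_self _ _ _
      have hQ : ∀ i, i ≠ j + 1 → Function.update P (j + 1) (T (j + 1)) i = P i :=
        fun i hi => Function.update_of_ne hi _ _
      obtain ⟨Q, hre, hQm, hQT, hQd⟩ := ih (by omega) _ hm
        (by
          intro k h1 h2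
          by_cases e : k = j + 1
          · rw [e, hQj]
          · rw [hQ k e]; exact hPT k h1 h2)
        (by
          intro k h1 h2
          by_cases e : k = j + 1
          · rw [e, hQj]; linarith
          · rw [hQ k e]; exact hηb k h1 h2)
        (by
          intro k hk hkn
          by_cases e : k = j + 1
          · rw [e, hQj]; linarith
          · rw [hQ k e]; exact hup k (by omega) hkn)
      exact ⟨Q, Relation.ReflTransGen.head hs hre, hQm, hQT, hQd⟩
    · -- j+1 < n : slide bead j+1 to min (T (j+1)) ((P (j+2) + P j)/2)
      have hgapP := hP.2.2.2 (j + 2) (by omega) (by omega)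
      have r1 : j + 2 - 1 = j + 1 := by omega
      have r2 : j + 2 - 2 = j := by omega
      rw [r1, r2] at hgapP
      have hPj1T : P (j + 1) ≤ T (j + 1) := hPT (j + 1) (by omega) (by omega)
      set x := min (T (j + 1)) ((P (j + 2) + P j) / 2) with hxdef
      have hx : P (j + 1) ≤ x := le_min hPj1T (by linarith)
      have hPjj1 : P j ≤ P (j + 1) := by
        rcases Nat.eq_zero_or_pos j with h0 | hpos
        · subst h0; simpa using hP.2.1
        · have := hP.2.2.1 (j + 1) (by omega) (by omega)
          have r3 : j + 1 - 1 = j := by omega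
          rw [r3] at this
          exact this.le
      have hstrict12 : P (j + 1) < P (j + 2) := by
        have := hP.2.2.1 (j + 2) (by omega) (by omega)
        rwa [r1] at this
      have hxavg : x ≤ (P (j + 2) + P j) / 2 := min_le_right _ _
      have hlt : x < P (j + 2) := by
        have : (P (j + 2) + P j) / 2 < P (j + 2) := by linarith
        linarith
      have hgap2' : x - P j ≤ P (j + 2) - x := by linarith
      obtain ⟨hs, hm⟩ := slide_one hP (by omega : 1 ≤ j + 1) (by omega : j + 1 ≤ n) hx
        (fun _ => hlt) (fun _ => hgap2')
      have hQj : Function.update P (j + 1) x (j + 1) = x := Function.update_self _ _ _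
      have hQ : ∀ i, i ≠ j + 1 → Function.update P (j + 1) x i = P i :=
        fun i hi => Function.update_of_ne hi _ _
      have hdefj : T j - P j ≤ η := by
        rcases Nat.eq_zero_or_pos j with h0 | hpos
        · subst h0
          have := hP.1
          have := hT.1
          linarith
        · exact hηb j (by omega) (by omega)
      have hdef1 : T (j + 1) - x ≤ ε := by
        rcases le_total (T (j + 1)) ((P (j + 2) + P j) / 2) with hle | hge
        · rw [hxdef, min_eq_left hle]; linarith
        · rw [hxdef, min_eq_right hge]
          have hslack := hcle (j + 2) (by omega) (by omega)
          rw [r1, r2] at hslack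
          have hup2 : T (j + 2) - P (j + 2) ≤ ε := hup (j + 2) (by omega) (by omega)
          linarith
      have hxT : x ≤ T (j + 1) := min_le_left _ _
      obtain ⟨Q, hre, hQm, hQT, hQd⟩ := ih (by omega) _ hm
        (by
          intro k h1 h2
          by_cases e : k = j + 1
          · rw [e, hQj]; exact hxT
          · rw [hQ k e]; exact hPT k h1 h2)
        (by
          intro k h1 h2
          by_cases e : k = j + 1
          · rw [e, hQj]; linarith
          · rw [hQ k e]; exact hηb k h1 h2)
        (by
          intro k hk hkn
          by_cases e : k = j + 1
          · rw [e, hQj]; exact hdef1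
          · rw [hQ k e]; exact hup k (by omega) hkn)
      exact ⟨Q, Relation.ReflTransGen.head hs hre, hQm, hQT, hQd⟩

private lemma exists_slack {n : ℕ} (f : ℕ → ℝ) (hf : ∀ k, 2 ≤ k → k ≤ n → 0 < f k) :
    ∃ c : ℝ, 0 < c ∧ ∀ k, 2 ≤ k → k ≤ n → 2 * c ≤ f k := by
  induction n with
  | zero => exact ⟨1, one_pos, fun k h2 hk => by omega⟩
  | succ m ih =>
    obtain ⟨c, hc, hle⟩ := ih (fun k h2 hk => hf k h2 (by omega))
    rcases lt_or_ge m 1 with hm | hm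
    · rcases Nat.lt_one_iff.mp hm with rfl
      by_cases h2 : (2:ℕ) ≤ 1
      · omega
      · exact ⟨1, one_pos, fun k hk2 hk1 => by omega⟩
    · refine ⟨min c (f (m + 1) / 2), lt_min hc (half_pos (hf (m + 1) (by omega) (by omega))), ?_⟩
      · intro k h2 hk
        rcases Nat.lt_succ_iff_lt_or_eq.mp (Nat.lt_succ_of_le hk) with h | h
        · have := hle k h2 (by omega)
          have : 2 * min c (f (m + 1) / 2) ≤ 2 * c := by
            have := min_le_left c (f (m + 1) / 2); linarith
          linarith [hle k h2 (by omega)]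
        · subst h
          have := min_le_right c (f (m + 1) / 2)
          linarith

private lemma exists_bound (f : ℕ → ℝ) (n : ℕ) :
    ∃ M : ℝ, 0 ≤ M ∧ ∀ k, k ≤ n → f k ≤ M := by
  induction n with
  | zero =>
    refine ⟨max 0 (f 0), le_max_left _ _, ?_⟩
    intro k hk
    interval_cases k
    exact le_max_right _ _
  | succ m ih =>
    obtain ⟨M, hM0, hMb⟩ := ih
    refine ⟨max M (f (m + 1)), le_trans hM0 (le_max_left _ _), ?_⟩
    intro k hk
    rcases Nat.lt_succ_iff_lt_or_eq.mp (Nat.lt_succ_of_le hk) with h | h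
    · exact le_trans (hMb k (by omega)) (le_max_left _ _)
    · subst h; exact le_max_right _ _

private lemma rounds {n : ℕ} {μ : ℝ} {T : ℕ → ℝ} (hT : BeadMono n μ T)
    {c : ℝ} (hc : 0 < c)
    (hcle : ∀ k, 2 ≤ k → k ≤ n → 2 * c ≤ (T k - T (k - 1)) - (T (k - 1) - T (k - 2))) :
    ∀ r : ℕ, ∀ P, BeadMono n μ P → (∀ k, 1 ≤ k → k ≤ n → P k ≤ T k) →
      (∀ k, 1 ≤ k → k ≤ n → T k - P k ≤ 2 * c * r) →
      ∃ Q, BeadReach n μ P Q ∧ ∀ k, k ≤ n → Q k = T k := by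
  intro r
  induction r with
  | zero =>
    intro P hP hPT hd
    refine ⟨P, Relation.ReflTransGen.refl, ?_⟩
    intro k hk
    rcases Nat.eq_zero_or_pos k with h0 | hpos
    · subst h0; rw [hP.1, hT.1]
    · have h1 := hPT k hpos hk
      have h2 := hd k hpos hk
      simp only [Nat.cast_zero, mul_zero] at h2
      linarith
  | succ r ih =>
    intro P hP hPT hd
    have hεη : 2 * c * (r : ℝ) ≤ 2 * c * ((r : ℕ) + 1 : ℕ) := by
      push_cast
      nlinarith [hc.le]
    obtain ⟨Q, hre, hQm, hQT, hQd⟩ := sweep_aux hT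
      (ε := 2 * c * r) (η := 2 * c * ((r + 1 : ℕ) : ℝ))
      (mul_nonneg (by linarith) (Nat.cast_nonneg r))
      (by push_cast; nlinarith [hc.le]) (by push_cast; ring_nf; linarith) hcle
      n le_rfl P hP hPT (by exact_mod_cast hd) (fun k hk hkn => absurd hk (by omega))
    obtain ⟨Q2, hre2, hQ2⟩ := ih Q hQm hQT hQd
    exact ⟨Q2, hre.trans hre2, hQ2⟩

/-- if the gaps of `B` are strictly increasing, every monotone
`A ≤ B` can be slid to `B`. -/
theorem slide_of_strict_gaps (n : ℕ) (μ : ℝ) (B : ℕ → ℝ)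
    (hB : BeadMono n μ B)
    (hgap : ∀ k, 2 ≤ k → k ≤ n → B (k - 1) - B (k - 2) < B k - B (k - 1)) :
    ∀ A : ℕ → ℝ, BeadMono n μ A → (∀ k, 1 ≤ k → k ≤ n → A k ≤ B k) →
      ∃ C : ℕ → ℝ, BeadReach n μ A C ∧ ∀ k, k ≤ n → C k = B k := by
  intro A hA hAB
  set T : ℕ → ℝ := fun k => if k ≤ n then B k else A k with hTdef
  have hTk : ∀ k, k ≤ n → T k = B k := fun k hk => if_pos hk
  have hT : BeadMono n μ T := by
    refine ⟨?_, ?_, ?_, ?_⟩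
    · rw [hTk 0 (Nat.zero_le n)]; exact hB.1
    · by_cases h1 : 1 ≤ n
      · rw [hTk 0 (Nat.zero_le n), hTk 1 h1]; exact hB.2.1
      · have hn : n = 0 := by omega
        have hT1 : T 1 = A 1 := if_neg (by omega)
        rw [hTk 0 (Nat.zero_le n), hT1, hB.1, ← hA.1]
        exact hA.2.1
    · intro k h2 hk
      rw [hTk k hk, hTk (k - 1) (by omega), ]
      exact hB.2.2.1 k h2 hk
    · intro k h2 hk
      rw [hTk k hk, hTk (k - 1) (by omega), hTk (k - 2) (by omega)]
      exact hB.2.2.2 k h2 hk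
  have hTgap : ∀ k, 2 ≤ k → k ≤ n → 0 < (T k - T (k - 1)) - (T (k - 1) - T (k - 2)) := by
    intro k h2 hk
    rw [hTk k hk, hTk (k - 1) (by omega), hTk (k - 2) (by omega)]
    have := hgap k h2 hk
    linarith
  obtain ⟨c, hc, hcle⟩ := exists_slack (n := n)
    (fun k => (T k - T (k - 1)) - (T (k - 1) - T (k - 2))) hTgap
  obtain ⟨M, hM0, hMb⟩ := exists_bound (fun k => T k - A k) n
  obtain ⟨r, hr⟩ := exists_nat_ge (M / (2 * c))
  have hMr : M ≤ 2 * c * r := by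
    rw [div_le_iff₀ (by positivity)] at hr
    linarith
  obtain ⟨Q, hre, hQ⟩ := rounds hT hc hcle r A hA
    (by
      intro k h1 hk
      rw [hTk k hk]
      exact hAB k h1 hk)
    (by
      intro k h1 hk
      have := hMb k hk
      linarith)
  exact ⟨Q, hre, fun k hk => by rw [hQ k hk, hTk k hk]⟩
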